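/- arXiv:2011.02965 — 2 statements merged into one kernel-verified Lean document; each statement's English description precedes it below -/
import Mathlib

section
/- For every integer n ≥ 1, ∫₀¹∫₀¹ Σ_{k=0}^{n−1} n · C(n−1, k) · (1 − uv)^{n−1−k} · (uv)^k / k! du dv = Σ_{k=0}^{n−1} (h_n − h_k)/k!, where C(n−1,k) is a binomial coefficient and h_m denotes the m-th harmonic number (h₀ = 0). -/
/-- The `m`-th harmonic number as a real number (`h 0 = 0`). -/
noncomputable def h (m : ℕ) : ℝ := ∑ j ∈ Finset.range m, (1 : ℝ) / (j + 1)

lemma h_succ (m : ℕ) : h (m+1) = h m + 1/((m:ℝ)+1) := by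
  unfold h; rw [Finset.sum_range_succ]

lemma one_sub_pow_expand (x : ℝ) (b : ℕ) :
    (1 - x)^b = ∑ j ∈ Finset.range (b+1), (b.choose j : ℝ) * (-1)^j * x^j := by
  have := add_pow (-x) 1 b
  rw [show (1 - x) = -x + 1 by ring, this]
  refine Finset.sum_congr rfl fun j _ => ?_
  rw [neg_pow]
  ring

lemma integral_sum_pow {ι : Type*} (s : Finset ι) (c : ι → ℝ) (p : ι → ℕ) :
    (∫ x in (0:ℝ)..1, ∑ i ∈ s, c i * x ^ (p i)) = ∑ i ∈ s, c i / ((p i : ℝ) + 1) := by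
  rw [intervalIntegral.integral_finset_sum (fun i _ =>
    (Continuous.intervalIntegrable (by continuity) _ _))]
  refine Finset.sum_congr rfl fun i _ => ?_
  rw [intervalIntegral.integral_const_mul, integral_pow]
  norm_num [mul_one_div, div_eq_mul_inv]

lemma S_succ (a b : ℕ) :
    (∑ j ∈ Finset.range (b+2), ((b+1).choose j : ℝ) * (-1)^j / ((a:ℝ)+j+1)^2)
      = (∑ j ∈ Finset.range (b+1), (b.choose j : ℝ) * (-1)^j / ((a:ℝ)+j+1)^2)
      - ∑ j ∈ Finset.range (b+1), (b.choose j : ℝ) * (-1)^j / ((a:ℝ)+1+j+1)^2 := by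
  rw [Finset.sum_range_succ' (fun j => ((b+1).choose j : ℝ) * (-1)^j / ((a:ℝ)+j+1)^2) (b+1)]
  have expand : ∀ i ∈ Finset.range (b+1),
      (((b+1).choose (i+1) : ℝ)) * (-1)^(i+1) / ((a:ℝ)+(i+1)+1)^2
        = (-((b.choose i : ℝ) * (-1)^i / ((a:ℝ)+1+i+1)^2))
          + ((b.choose (i+1) : ℝ)) * (-1)^(i+1) / ((a:ℝ)+(i+1)+1)^2 := by
    intro i _
    rw [Nat.choose_succ_succ]
    push_cast
    ring
  push_cast
  rw [Finset.sum_congr rfl expand, Finset.sum_add_distrib, Finset.sum_neg_distrib]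
  have h2 : (∑ i ∈ Finset.range (b+1), ((b.choose (i+1) : ℝ)) * (-1)^(i+1) / ((a:ℝ)+(i+1)+1)^2)
      = (∑ j ∈ Finset.range (b+1), (b.choose j : ℝ) * (-1)^j / ((a:ℝ)+j+1)^2)
        - 1 / ((a:ℝ)+1)^2 := by
    have := Finset.sum_range_succ' (fun j => ((b.choose j : ℝ)) * (-1)^j / ((a:ℝ)+j+1)^2) (b+1)
    rw [Finset.sum_range_succ (fun j => ((b.choose j : ℝ)) * (-1)^j / ((a:ℝ)+j+1)^2) (b+1)] at this
    simp only [Nat.choose_succ_self, Nat.cast_zero, zero_mul, zero_div, add_zero] at this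
    simp only [Nat.choose_zero_right, Nat.cast_one, pow_zero, one_mul] at this
    push_cast at this ⊢
    linarith [this]
  rw [h2]
  simp only [Nat.choose_zero_right, Nat.cast_one, pow_zero, one_mul, Nat.cast_zero, add_zero]
  ring

lemma sumId (b : ℕ) : ∀ a : ℕ,
    (∑ j ∈ Finset.range (b+1), (b.choose j : ℝ) * (-1)^j / ((a:ℝ)+j+1)^2)
      = ((a.factorial : ℝ) * b.factorial / (a+b+1).factorial) * (h (a+b+1) - h a) := by
  induction b with
  | zero =>
    intro a
    have h1 : ((a:ℝ)+1) ≠ 0 := by positivity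
    have h2 : ((a.factorial : ℝ)) ≠ 0 := Nat.cast_ne_zero.mpr (Nat.factorial_ne_zero a)
    simp only [Finset.sum_range_one, Nat.choose_zero_right, Nat.cast_one, pow_zero, one_mul,
      Nat.cast_zero, add_zero, Nat.add_zero, Nat.factorial_one, mul_one, zero_add]
    rw [h_succ, Nat.factorial_succ]
    push_cast
    field_simp
    ring
  | succ b ih =>
    intro a
    rw [S_succ a b, ih a]
    have iha := ih (a+1)
    rw [show (((a+1:ℕ)):ℝ) = (a:ℝ)+1 by push_cast; ring] at iha
    rw [iha]
    have e1 : a+(b+1)+1 = (a+b+1)+1 := by omega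
    have e2 : (a+1)+b+1 = (a+b+1)+1 := by omega
    rw [e1, e2, h_succ (a+b+1), h_succ a, Nat.factorial_succ (a+b+1), Nat.factorial_succ a,
      Nat.factorial_succ b]
    have h1 : ((a:ℝ)+1) ≠ 0 := by positivity
    have h3 : ((a:ℝ)+b+1+1) ≠ 0 := by positivity
    have h2 : ((a.factorial : ℝ)) ≠ 0 := Nat.cast_ne_zero.mpr (Nat.factorial_ne_zero a)
    have h4 : ((b.factorial : ℝ)) ≠ 0 := Nat.cast_ne_zero.mpr (Nat.factorial_ne_zero b)
    have h5 : (((a+b+1).factorial : ℝ)) ≠ 0 := Nat.cast_ne_zero.mpr (Nat.factorial_ne_zero _)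
    push_cast
    field_simp
    ring

theorem stmt13 (n : ℕ) (hn : 1 ≤ n) :
    ∫ v in (0:ℝ)..1, ∫ u in (0:ℝ)..1,
        ∑ k ∈ Finset.range n,
          (n : ℝ) * (n - 1).choose k * (1 - u * v) ^ (n - 1 - k) * (u * v) ^ k
            / k.factorial
      = ∑ k ∈ Finset.range n, (h n - h k) / k.factorial := by
  obtain ⟨m, rfl⟩ : ∃ m, n = m + 1 := ⟨n - 1, by omega⟩
  simp only [Nat.add_sub_cancel]
  set S : Finset ((_ : ℕ) × ℕ) := (Finset.range (m+1)).sigma (fun k => Finset.range (m - k + 1))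
    with hS
  set C : ((_ : ℕ) × ℕ) → ℝ := fun i =>
    (((m+1:ℕ)):ℝ) * (m.choose i.1) * ((m - i.1).choose i.2) * (-1)^i.2 / (i.1.factorial) with hC
  have key : ∀ v u : ℝ,
      (∑ k ∈ Finset.range (m+1),
          (((m+1:ℕ)):ℝ) * (m.choose k) * (1 - u * v)^(m - k) * (u*v)^k / (k.factorial))
        = ∑ i ∈ S, (C i * v ^ (i.1 + i.2)) * u ^ (i.1 + i.2) := by
    intro v u
    rw [hS, Finset.sum_sigma]
    refine Finset.sum_congr rfl fun k hk => ?_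
    rw [one_sub_pow_expand (u*v) (m-k), Finset.mul_sum, Finset.sum_mul, Finset.sum_div]
    refine Finset.sum_congr rfl fun j _ => ?_
    simp only [hC]
    rw [mul_pow, mul_pow, pow_add, pow_add]
    ring
  have inner : ∀ v : ℝ,
      (∫ u in (0:ℝ)..1, ∑ k ∈ Finset.range (m+1),
          (((m+1:ℕ)):ℝ) * (m.choose k) * (1 - u * v)^(m - k) * (u*v)^k / (k.factorial))
        = ∑ i ∈ S, (C i / ((((i.1 + i.2 : ℕ)):ℝ) + 1)) * v ^ (i.1 + i.2) := by
    intro v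
    rw [intervalIntegral.integral_congr (g := fun u => ∑ i ∈ S,
        (C i * v ^ (i.1 + i.2)) * u ^ (i.1 + i.2)) (fun u _ => key v u),
      integral_sum_pow S (fun i => C i * v ^ (i.1 + i.2)) (fun i => i.1 + i.2)]
    refine Finset.sum_congr rfl fun i _ => ?_
    ring
  rw [intervalIntegral.integral_congr (g := fun v => ∑ i ∈ S,
      (C i / ((((i.1 + i.2 : ℕ)):ℝ) + 1)) * v ^ (i.1 + i.2)) (fun v _ => inner v),
    integral_sum_pow S (fun i => C i / ((((i.1 + i.2 : ℕ)):ℝ) + 1)) (fun i => i.1 + i.2)]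
  rw [hS, Finset.sum_sigma]
  refine Finset.sum_congr rfl fun k hk => ?_
  have hk' : k ≤ m := Nat.lt_succ_iff.mp (Finset.mem_range.mp hk)
  have step : ∀ j ∈ Finset.range (m - k + 1),
      C ⟨k, j⟩ / ((((k + j : ℕ)):ℝ) + 1) / ((((k + j : ℕ)):ℝ) + 1)
        = ((((m+1:ℕ)):ℝ) * (m.choose k) / (k.factorial)) *
            (((m - k).choose j : ℝ) * (-1)^j / ((k:ℝ)+j+1)^2) := by
    intro j _
    simp only [hC]
    rw [div_div, ← sq]
    push_cast
    ring
  rw [Finset.sum_congr rfl step, ← Finset.mul_sum, sumId (m - k) k,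
    show k + (m - k) + 1 = m + 1 by omega]
  have hfk : ((k.factorial : ℝ)) ≠ 0 := Nat.cast_ne_zero.mpr (Nat.factorial_ne_zero _)
  have hfmk : (((m-k).factorial : ℝ)) ≠ 0 := Nat.cast_ne_zero.mpr (Nat.factorial_ne_zero _)
  have hfm : (((m+1).factorial : ℝ)) ≠ 0 := Nat.cast_ne_zero.mpr (Nat.factorial_ne_zero _)
  have hfac : ((m.choose k : ℝ)) * (k.factorial) * ((m-k).factorial) = ((m.factorial : ℝ)) := by
    exact_mod_cast congrArg (Nat.cast (R := ℝ)) (Nat.choose_mul_factorial_mul_factorial hk')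
  have hfs : (((m+1).factorial : ℝ)) = (((m+1:ℕ)):ℝ) * (m.factorial) := by
    rw [Nat.factorial_succ]; push_cast; ring
  have key2 : (((m+1:ℕ)):ℝ) * (m.choose k) *
      ((k.factorial : ℝ) * ((m - k).factorial) * (h (m+1) - h k) / (((m+1).factorial : ℝ)))
        = h (m+1) - h k := by
    rw [hfs]
    have hfm' : ((m.factorial : ℝ)) ≠ 0 := Nat.cast_ne_zero.mpr (Nat.factorial_ne_zero _)
    push_cast at hfac ⊢
    field_simp
    linear_combination (h (m + 1) - h k) * hfac
  rw [show (((m+1:ℕ)):ℝ) * (m.choose k) / (k.factorial : ℝ) *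
      ((k.factorial : ℝ) * ((m - k).factorial) / (((m+1).factorial : ℝ)) * (h (m+1) - h k))
      = ((((m+1:ℕ)):ℝ) * (m.choose k) *
        ((k.factorial : ℝ) * ((m - k).factorial) * (h (m+1) - h k) / (((m+1).factorial : ℝ))))
          / (k.factorial : ℝ) by ring, key2]
end

section
/- Let a_n = (1/n) Σ_{k=0}^{n−1} (h_n − h_k)/k!, the expected proportion of elements of a random n-point 2D-order whose strict down-set is an antichain. Then lim_{n→∞} n·a_n / ln n = e; more precisely n·a_n − e·ln n converges to e·(γ − Ein(1)) as n → ∞. -/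
/-
Write `n·a n = h n · Eₙ - Sₙ` with `Eₙ = ∑_{k<n} 1/k!` and `Sₙ = ∑_{k<n} h k/k!`. Then
`n·a n - e·log n = (h n - log n)·Eₙ - log n·(e - Eₙ) - Sₙ`, where `h n - log n → γ`, `Eₙ → e`,
the tail `e - Eₙ` decays factorially and so beats `log n`, and `Sₙ → ∑ h n/n! = e·Ein(1)`:
the harmonic numbers are the alternating binomial sums `h n = ∑_{k<n} (-1)^k C(n,k+1)/(k+1)`,
which makes `∑ h n/n!` the Cauchy product of the series of `Ein(1)` and of `e`.
-/

open Filter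

/-- The entire exponential integral `Ein(z) = ∑_{n≥1} (-1)^{n-1} zⁿ/(n·n!)`. -/
noncomputable def Ein (z : ℝ) : ℝ :=
  ∑' n : ℕ, (-1) ^ n * z ^ (n + 1) / ((n + 1) * (n + 1).factorial)

/-- The expected proportion of elements of a random `n`-point 2D-order whose
strict down-set is an antichain. -/
noncomputable def a (n : ℕ) : ℝ :=
  (1 / n) * ∑ k ∈ Finset.range n, (h n - h k) / k.factorial

open Finset Topology

theorem sum_range_alternating_choose_succ (n : ℕ) :
    ∑ k ∈ range (n + 1), (-1 : ℚ) ^ k * (n + 1).choose (k + 1) = 1 := by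
  have hzero : ∑ k ∈ range (n + 1 + 1), (-1 : ℚ) ^ k * (n + 1).choose k = 0 := by
    exact_mod_cast Int.alternating_sum_range_choose_of_ne n.succ_ne_zero
  rw [sum_range_succ'] at hzero
  simp only [pow_succ, pow_zero, mul_neg_one, neg_mul, sum_neg_distrib, Nat.choose_zero_right,
    Nat.cast_one, mul_one] at hzero
  linarith

theorem sum_range_alternating_choose_div (n : ℕ) :
    ∑ k ∈ range (n + 1), (-1 : ℚ) ^ k * n.choose k / (k + 1) = 1 / (n + 1) := by
  have hterm (k : ℕ) : (-1 : ℚ) ^ k * n.choose k / (k + 1)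
      = (-1) ^ k * (n + 1).choose (k + 1) / (n + 1) := by
    have habsorb : ((n : ℚ) + 1) * n.choose k = (n + 1).choose (k + 1) * (k + 1) := by
      exact_mod_cast Nat.add_one_mul_choose_eq n k
    rw [div_eq_div_iff (by positivity) (by positivity)]
    linear_combination (-1 : ℚ) ^ k * habsorb
  simp_rw [hterm, ← sum_div, sum_range_alternating_choose_succ]

theorem harmonic_eq_sum_alternating_choose (n : ℕ) :
    harmonic n = ∑ k ∈ range n, (-1 : ℚ) ^ k * n.choose (k + 1) / (k + 1) := by
  induction n with
  | zero => simp
  | succ n ih =>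
    have hpascal (k : ℕ) : (-1 : ℚ) ^ k * (n + 1).choose (k + 1) / (k + 1)
        = (-1) ^ k * n.choose (k + 1) / (k + 1) + (-1) ^ k * n.choose k / (k + 1) := by
      rw [Nat.choose_succ_succ']
      push_cast
      ring
    simp_rw [harmonic_succ, hpascal, sum_add_distrib, sum_range_alternating_choose_div,
      sum_range_succ _ n, Nat.choose_succ_self, ih]
    push_cast
    ring

theorem h_eq_harmonic (n : ℕ) : h n = harmonic n := by
  simp [h, harmonic, one_div]

theorem h_succ_div_factorial (n : ℕ) :
    h (n + 1) / (n + 1).factorial = ∑ k ∈ range (n + 1),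
      (-1 : ℝ) ^ k / ((k + 1) * (k + 1).factorial) * (1 / (n - k).factorial) := by
  rw [h_eq_harmonic, harmonic_eq_sum_alternating_choose]
  push_cast
  rw [sum_div]
  refine sum_congr rfl fun k hk => ?_
  have hkn : k + 1 ≤ n + 1 := by simpa using hk
  rw [Nat.cast_choose ℝ hkn, Nat.add_sub_add_right]
  field_simp

theorem hasSum_one_div_factorial :
    HasSum (fun n : ℕ => 1 / (n.factorial : ℝ)) (Real.exp 1) := by
  simpa [Real.exp_eq_exp_ℝ] using NormedSpace.expSeries_div_hasSum_exp (1 : ℝ)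

theorem summable_norm_Ein_one_coeff :
    Summable fun k : ℕ => ‖(-1 : ℝ) ^ k / ((k + 1) * (k + 1).factorial)‖ := by
  refine hasSum_one_div_factorial.summable.of_nonneg_of_le (fun _ => norm_nonneg _) fun k => ?_
  rw [norm_div, norm_pow, norm_neg, norm_one, one_pow, Real.norm_of_nonneg (by positivity)]
  gcongr
  have hfact : (k.factorial : ℝ) ≤ (k + 1).factorial := by exact_mod_cast Nat.factorial_le k.le_succ
  nlinarith [(k.cast_nonneg : (0 : ℝ) ≤ k)]

theorem hasSum_Ein_one :
    HasSum (fun k : ℕ => (-1 : ℝ) ^ k / ((k + 1) * (k + 1).factorial)) (Ein 1) := by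
  simpa [Ein] using summable_norm_Ein_one_coeff.of_norm.hasSum

theorem hasSum_h_div_factorial :
    HasSum (fun n : ℕ => h n / n.factorial) (Real.exp 1 * Ein 1) := by
  have hexp : Summable fun n : ℕ => ‖1 / (n.factorial : ℝ)‖ :=
    summable_norm_iff.mpr hasSum_one_div_factorial.summable
  have hprod := tsum_mul_tsum_eq_tsum_sum_range_of_summable_norm summable_norm_Ein_one_coeff hexp
  have hsum := (summable_norm_sum_mul_range_of_summable_norm summable_norm_Ein_one_coeff hexp).of_norm
  simp_rw [← h_succ_div_factorial] at hprod hsum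
  rw [← hasSum_nat_add_iff' 1, mul_comm, ← hasSum_Ein_one.tsum_eq,
    ← hasSum_one_div_factorial.tsum_eq, hprod]
  simpa [h] using hsum.hasSum

theorem tendsto_natCast_mul_tsum_nat_add {f : ℕ → ℝ} (hf : ∀ k, 0 ≤ f k)
    (hsum : Summable fun k : ℕ => k * f k) :
    Tendsto (fun n : ℕ => n * ∑' k, f (k + n)) atTop (𝓝 0) := by
  refine squeeze_zero (fun n => mul_nonneg n.cast_nonneg (tsum_nonneg fun k => hf _))
    (fun n => ?_) (tendsto_sum_nat_add fun k : ℕ => k * f k)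
  have htail : Summable fun k : ℕ => ((k + n : ℕ) : ℝ) * f (k + n) :=
    (summable_nat_add_iff n).mpr hsum
  have hle (k : ℕ) : (n : ℝ) * f (k + n) ≤ ((k + n : ℕ) : ℝ) * f (k + n) :=
    mul_le_mul_of_nonneg_right (by push_cast; linarith [k.cast_nonneg (α := ℝ)]) (hf _)
  rw [← tsum_mul_left]
  exact Summable.tsum_le_tsum hle
    (htail.of_nonneg_of_le (fun k => mul_nonneg n.cast_nonneg (hf _)) hle) htail

theorem summable_natCast_mul_one_div_factorial :
    Summable fun k : ℕ => (k : ℝ) * (1 / k.factorial) := by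
  rw [← summable_nat_add_iff 1]
  refine hasSum_one_div_factorial.summable.congr fun k => ?_
  rw [Nat.factorial_succ]
  push_cast
  field_simp

theorem tendsto_log_mul_exp_one_sub_sum_range :
    Tendsto (fun n : ℕ => Real.log n * (Real.exp 1 - ∑ k ∈ range n, 1 / (k.factorial : ℝ)))
      atTop (𝓝 0) := by
  have htail (n : ℕ) : Real.exp 1 - ∑ k ∈ range n, 1 / (k.factorial : ℝ)
      = ∑' k, 1 / ((k + n).factorial : ℝ) := by
    rw [← hasSum_one_div_factorial.tsum_eq,
      ← hasSum_one_div_factorial.summable.sum_add_tsum_nat_add n, add_sub_cancel_left]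
  simp_rw [htail]
  refine squeeze_zero' ?_ ?_ (tendsto_natCast_mul_tsum_nat_add (fun k => by positivity)
    summable_natCast_mul_one_div_factorial)
  · filter_upwards [eventually_ge_atTop 1] with n hn
    exact mul_nonneg (Real.log_nonneg (by exact_mod_cast hn)) (tsum_nonneg fun k => by positivity)
  · filter_upwards [eventually_ge_atTop 1] with n hn
    have hlog : Real.log n ≤ n := (Real.log_le_sub_one_of_pos (by positivity)).trans (by linarith)
    exact mul_le_mul_of_nonneg_right hlog (tsum_nonneg fun k => by positivity)

theorem natCast_mul_a {n : ℕ} (hn : n ≠ 0) :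
    n * a n = h n * ∑ k ∈ range n, 1 / (k.factorial : ℝ) - ∑ k ∈ range n, h k / k.factorial := by
  rw [a, ← mul_assoc, mul_one_div_cancel (by exact_mod_cast hn), one_mul, mul_sum,
    ← sum_sub_distrib]
  refine sum_congr rfl fun k _ => ?_
  ring

theorem tendsto_natCast_mul_a_sub_exp_one_mul_log :
    Tendsto (fun n : ℕ => n * a n - Real.exp 1 * Real.log n) atTop
      (𝓝 (Real.exp 1 * (Real.eulerMascheroniConstant - Ein 1))) := by
  have hγ : Tendsto (fun n : ℕ => h n - Real.log n) atTop (𝓝 Real.eulerMascheroniConstant) := by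
    simpa only [h_eq_harmonic] using Real.tendsto_harmonic_sub_log
  have hlim := ((hγ.mul hasSum_one_div_factorial.tendsto_sum_nat).sub
    tendsto_log_mul_exp_one_sub_sum_range).sub hasSum_h_div_factorial.tendsto_sum_nat
  rw [sub_zero, mul_comm, ← mul_sub] at hlim
  refine hlim.congr' ?_
  filter_upwards [eventually_ne_atTop 0] with n hn
  rw [natCast_mul_a hn]
  ring

theorem tendsto_div_log_of_tendsto_sub_mul_log {u : ℕ → ℝ} {c L : ℝ}
    (hu : Tendsto (fun n : ℕ => u n - c * Real.log n) atTop (𝓝 L)) :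
    Tendsto (fun n : ℕ => u n / Real.log n) atTop (𝓝 c) := by
  have hinv : Tendsto (fun n : ℕ => (Real.log n)⁻¹) atTop (𝓝 0) :=
    (Real.tendsto_log_atTop.comp tendsto_natCast_atTop_atTop).inv_tendsto_atTop
  have hlim := (hu.mul hinv).add_const c
  rw [mul_zero, zero_add] at hlim
  refine hlim.congr' ?_
  filter_upwards [eventually_gt_atTop 1] with n hn
  have hlog : Real.log n ≠ 0 := (Real.log_pos (by exact_mod_cast hn)).ne'
  field_simp
  ring

theorem stmt14 :
    Tendsto (fun n : ℕ => (n * a n) / Real.log n) atTop (nhds (Real.exp 1)) ∧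
    Tendsto (fun n : ℕ => n * a n - Real.exp 1 * Real.log n) atTop
      (nhds (Real.exp 1 * (Real.eulerMascheroniConstant - Ein 1))) :=
  ⟨tendsto_div_log_of_tendsto_sub_mul_log tendsto_natCast_mul_a_sub_exp_one_mul_log,
    tendsto_natCast_mul_a_sub_exp_one_mul_log⟩
end
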